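/- arXiv:2307.05210 — 3 statements merged into one kernel-verified Lean document; each statement's English description precedes it below -/
import Mathlib

section
/- Let u be a unit vector in ℝ^d, v ∈ ℝ^d, P := I - u uᵀ the tangential projection associated to u, and suppose the tangential part vanishes: P v = 0 (i.e., v is parallel to u). If w is another unit vector with ‖u - w‖₂ ≤ ε and Q := I - w wᵀ, then ‖Q v‖₂ ≤ 2 ε ‖v‖₂. -/
open scoped RealInnerProductSpace

theorem stmt_3 (d : ℕ) (u w v : EuclideanSpace ℝ (Fin d))
    (hu : ‖u‖ = 1) (hw : ‖w‖ = 1)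
    (hv : v - ⟪v, u⟫ • u = 0)
    (ε : ℝ) (hε : ‖u - w‖ ≤ ε) :
    ‖v - ⟪v, w⟫ • w‖ ≤ 2 * ε * ‖v‖ := by
  have hveq : v = ⟪v, u⟫ • u := by
    exact sub_eq_zero.mp hv
  set c := ⟪v, u⟫ with hc
  have hcv : |c| ≤ ‖v‖ := by
    calc |c| ≤ ‖v‖ * ‖u‖ := abs_real_inner_le_norm v u
    _ = ‖v‖ := by rw [hu, mul_one]
  have key : v - ⟪v, w⟫ • w = c • (u - ⟪u, w⟫ • w) := by
    rw [hveq]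
    rw [real_inner_smul_left]
    rw [smul_sub, smul_smul]
  have huw : ‖u - w‖ ≤ 2 := by
    calc ‖u - w‖ ≤ ‖u‖ + ‖w‖ := norm_sub_le u w
    _ = 2 := by rw [hu, hw]; norm_num
  have hinner : 1 - ⟪u, w⟫ = ‖u - w‖ ^ 2 / 2 := by
    have := @norm_sub_sq_real (EuclideanSpace ℝ (Fin d)) _ _ u w
    rw [hu, hw] at this
    nlinarith
  have h1 : |1 - ⟪u, w⟫| ≤ ε := by
    rw [hinner, abs_of_nonneg (by positivity)]
    nlinarith [norm_nonneg (u - w)]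
  have h2 : ‖u - ⟪u, w⟫ • w‖ ≤ 2 * ε := by
    have : u - ⟪u, w⟫ • w = (u - w) + (1 - ⟪u, w⟫) • w := by
      rw [sub_smul, one_smul]; abel
    rw [this]
    calc ‖(u - w) + (1 - ⟪u, w⟫) • w‖ ≤ ‖u - w‖ + ‖(1 - ⟪u, w⟫) • w‖ := norm_add_le _ _
    _ = ‖u - w‖ + |1 - ⟪u, w⟫| := by rw [norm_smul, Real.norm_eq_abs, hw, mul_one]
    _ ≤ ε + ε := add_le_add hε h1
    _ = 2 * ε := by ring
  calc ‖v - ⟪v, w⟫ • w‖ = |c| * ‖u - ⟪u, w⟫ • w‖ := by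
        rw [key, norm_smul, Real.norm_eq_abs]
  _ ≤ ‖v‖ * (2 * ε) := by
        apply mul_le_mul hcv h2 (norm_nonneg _) (norm_nonneg _)
  _ = 2 * ε * ‖v‖ := by ring
end

section
/- Let f : ℝ^d → ℝ be differentiable with ∇f Lipschitz of constant L, and let Φ : Ω → Ω satisfy ‖Φ(x) - x‖₂ ≤ δ and ‖DΦ(x) - I‖ ≤ η (operator norm) for all x in open Ω ⊂ ℝ^d, with Φ differentiable. Then for every x ∈ Ω, ‖∇(f ∘ Φ)(x) - ∇f(x)‖₂ ≤ (1+η) L δ + η ‖∇f(x)‖₂. -/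
open scoped NNReal

/-! By the Riesz isometry the claim is about `Df(Φ x) ∘ DΦ(x) - Df(x)`, which splits as
`Df(Φ x) ∘ (DΦ(x) - I) + (Df(Φ x) - Df(x))`. The second term is at most `L δ` because `∇f` is
`L`-Lipschitz, and the first at most `η ‖Df(Φ x)‖ ≤ η (‖∇f(x)‖ + L δ)`. -/

theorem ContinuousLinearMap.norm_comp_sub_le_of_norm_sub_id_le {𝕜 E F : Type*}
    [NontriviallyNormedField 𝕜] [SeminormedAddCommGroup E] [NormedSpace 𝕜 E]
    [SeminormedAddCommGroup F] [NormedSpace 𝕜 F] {A B : E →L[𝕜] F} {D : E →L[𝕜] E} {ε η : ℝ}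
    (hAB : ‖A - B‖ ≤ ε) (hD : ‖D - ContinuousLinearMap.id 𝕜 E‖ ≤ η) :
    ‖A.comp D - B‖ ≤ (1 + η) * ε + η * ‖B‖ := by
  have hsplit : A.comp D - B = A.comp (D - ContinuousLinearMap.id 𝕜 E) + (A - B) := by
    rw [ContinuousLinearMap.comp_sub, ContinuousLinearMap.comp_id]; abel
  have hA : ‖A‖ ≤ ‖B‖ + ε := by
    calc ‖A‖ ≤ ‖B‖ + ‖A - B‖ := norm_le_norm_add_norm_sub' A B
      _ ≤ ‖B‖ + ε := by gcongr
  calc ‖A.comp D - B‖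
      ≤ ‖A‖ * ‖D - ContinuousLinearMap.id 𝕜 E‖ + ‖A - B‖ := by
        rw [hsplit]; exact (norm_add_le _ _).trans (by gcongr; exact A.opNorm_comp_le _)
    _ ≤ (‖B‖ + ε) * η + ε :=
        add_le_add (mul_le_mul hA hD (norm_nonneg _) ((norm_nonneg A).trans hA)) hAB
    _ = (1 + η) * ε + η * ‖B‖ := by ring

section Gradient

variable {E : Type*} [NormedAddCommGroup E] [InnerProductSpace ℝ E] [CompleteSpace E]

theorem norm_gradient_sub_gradient (f g : E → ℝ) (x y : E) :
    ‖gradient f x - gradient g y‖ = ‖fderiv ℝ f x - fderiv ℝ g y‖ := by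
  rw [gradient, gradient, ← map_sub, LinearIsometryEquiv.norm_map]

theorem norm_gradient (f : E → ℝ) (x : E) : ‖gradient f x‖ = ‖fderiv ℝ f x‖ :=
  LinearIsometryEquiv.norm_map _ _

end Gradient

theorem stmt_6_general (d : ℕ) (Ω : Set (EuclideanSpace ℝ (Fin d)))
    (f : EuclideanSpace ℝ (Fin d) → ℝ) (hf : Differentiable ℝ f)
    (L : ℝ≥0) (hgrad : LipschitzWith L (gradient f))
    (Φ : EuclideanSpace ℝ (Fin d) → EuclideanSpace ℝ (Fin d))
    (hΦdiff : ∀ x ∈ Ω, DifferentiableAt ℝ Φ x)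
    (δ η : ℝ)
    (hΦδ : ∀ x ∈ Ω, ‖Φ x - x‖ ≤ δ)
    (hΦη : ∀ x ∈ Ω, ‖fderiv ℝ Φ x - ContinuousLinearMap.id ℝ _‖ ≤ η) :
    ∀ x ∈ Ω, ‖gradient (f ∘ Φ) x - gradient f x‖ ≤
      (1 + η) * (L : ℝ) * δ + η * ‖gradient f x‖ := by
  intro x hx
  have hshift : ‖fderiv ℝ f (Φ x) - fderiv ℝ f x‖ ≤ L * δ := by
    rw [← norm_gradient_sub_gradient, ← dist_eq_norm]
    calc dist (gradient f (Φ x)) (gradient f x) ≤ L * dist (Φ x) x := hgrad.dist_le_mul _ _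
      _ ≤ L * δ := by rw [dist_eq_norm]; gcongr; exact hΦδ x hx
  rw [norm_gradient_sub_gradient, fderiv_comp x (hf _) (hΦdiff x hx), norm_gradient, mul_assoc]
  exact ContinuousLinearMap.norm_comp_sub_le_of_norm_sub_id_le hshift (hΦη x hx)

theorem stmt_6 (d : ℕ) (Ω : Set (EuclideanSpace ℝ (Fin d))) (hΩ : IsOpen Ω)
    (f : EuclideanSpace ℝ (Fin d) → ℝ) (hf : Differentiable ℝ f)
    (L : ℝ≥0) (hgrad : LipschitzWith L (gradient f))
    (Φ : EuclideanSpace ℝ (Fin d) → EuclideanSpace ℝ (Fin d))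
    (hΦmaps : Set.MapsTo Φ Ω Ω)
    (hΦdiff : ∀ x ∈ Ω, DifferentiableAt ℝ Φ x)
    (δ η : ℝ) (hδ : 0 ≤ δ) (hη : 0 ≤ η)
    (hΦδ : ∀ x ∈ Ω, ‖Φ x - x‖ ≤ δ)
    (hΦη : ∀ x ∈ Ω, ‖fderiv ℝ Φ x - ContinuousLinearMap.id ℝ _‖ ≤ η) :
    ∀ x ∈ Ω, ‖gradient (f ∘ Φ) x - gradient f x‖ ≤
      (1 + η) * (L : ℝ) * δ + η * ‖gradient f x‖ :=
  stmt_6_general d Ω f hf L hgrad Φ hΦdiff δ η hΦδ hΦη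
end

section
/- Let X, Y be real inner product spaces (or Hilbert spaces) and let B : (X × Y) × (X × Y) → ℝ be the bilinear form B[(u,z),(v,w)] = a(v,z) + s(u,v) + a(u,w) - t(z,w), where s is a symmetric positive semidefinite bilinear form on X, t is a symmetric positive semidefinite bilinear form on Y, and a : X × Y → ℝ is any bilinear form. Define the seminorm |||(u,z)|||² := s(u,u) + t(z,z). Then for every (u,z), sup over (v,w) with |||(v,w)||| ≤ 1 of B[(u,z),(v,w)] ≥ |||(u,z)|||, i.e., the inf-sup constant of B with respect to ||| · ||| is at least 1. -/
theorem stmt_7 (X Y : Type*)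
    [NormedAddCommGroup X] [InnerProductSpace ℝ X]
    [NormedAddCommGroup Y] [InnerProductSpace ℝ Y]
    (a : X →ₗ[ℝ] Y →ₗ[ℝ] ℝ)
    (s : X →ₗ[ℝ] X →ₗ[ℝ] ℝ) (hs_symm : ∀ x x', s x x' = s x' x)
    (hs_pos : ∀ x, 0 ≤ s x x)
    (t : Y →ₗ[ℝ] Y →ₗ[ℝ] ℝ) (ht_symm : ∀ y y', t y y' = t y' y)
    (ht_pos : ∀ y, 0 ≤ t y y)
    (B : (X × Y) → (X × Y) → ℝ)
    (hB : ∀ u z v w, B (u, z) (v, w) = a v z + s u v + a u w - t z w) :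
    ∀ u z, ∃ v w, Real.sqrt (s v v + t w w) ≤ 1 ∧
      Real.sqrt (s u u + t z z) ≤ B (u, z) (v, w) := by
  intro u z
  set Q : ℝ := s u u + t z z with hQ
  have hQ0 : 0 ≤ Q := add_nonneg (hs_pos u) (ht_pos z)
  set N : ℝ := Real.sqrt Q with hN
  rcases eq_or_lt_of_le hQ0 with h0 | hpos
  · refine ⟨0, 0, ?_, ?_⟩
    · simp
    · have : N = 0 := by rw [hN, ← h0, Real.sqrt_zero]
      rw [this, hB]
      simp
  · have hNpos : 0 < N := Real.sqrt_pos.mpr hpos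
    refine ⟨(N⁻¹) • u, -(N⁻¹) • z, ?_, ?_⟩
    · have : s ((N⁻¹) • u) ((N⁻¹) • u) + t (-(N⁻¹) • z) (-(N⁻¹) • z)
        = (N⁻¹)^2 * Q := by
        simp [map_smul, LinearMap.smul_apply, hQ]
        ring
      rw [this]
      have hQN : Q = N ^ 2 := (Real.sq_sqrt hQ0).symm
      rw [hQN]
      have : (N⁻¹)^2 * N^2 = 1 := by
        field_simp
      rw [this, Real.sqrt_one]
    · rw [hB]
      have : a ((N⁻¹) • u) z + s u ((N⁻¹) • u) + a u (-(N⁻¹) • z) - t z (-(N⁻¹) • z)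
          = N⁻¹ * Q := by
        simp [map_smul, LinearMap.smul_apply, hQ]
        ring
      rw [this]
      have hQN : Q = N ^ 2 := (Real.sq_sqrt hQ0).symm
      rw [hQN]
      have : N⁻¹ * N ^ 2 = N := by field_simp
      rw [this]
end
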